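/- Let ρ be a positive semidefinite complex n × n matrix with 0 < Tr ρ ≤ 1, let τ be a positive semidefinite n × n matrix with trace 1, let λ ∈ (0, 1], and let 0 ≤ w₁ ≤ w₂ ≤ 1. With N_w(ρ) = ρ / (Tr ρ)^{1−w} and Δ_λ(X) = (1−λ)X + λ·I/n, we have −Tr(τ · log Δ_λ(N_{w₁}(ρ))) ≤ −Tr(τ · log Δ_λ(N_{w₂}(ρ))), where log denotes the matrix logarithm obtained by applying the real logarithm to the eigenvalues in a spectral decomposition of the (positive definite) Hermitian argument. Hence the cross-entropy loss L_w is monotone nondecreasing in the hyperparameter w. -/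

import Mathlib

open Matrix ComplexOrder

/-- Matrix logarithm of a Hermitian matrix, obtained by applying the real logarithm to the
eigenvalues in a spectral decomposition (and `0` on non-Hermitian input). -/
noncomputable def matLog {n : Type*} [Fintype n] [DecidableEq n]
    (H : Matrix n n ℂ) : Matrix n n ℂ :=
  if hH : H.IsHermitian then
    (hH.eigenvectorUnitary : Matrix n n ℂ) *
      Matrix.diagonal (fun i => (Real.log (hH.eigenvalues i) : ℂ)) *
      star (hH.eigenvectorUnitary : Matrix n n ℂ)
  else 0

/-- The depolarizing channel `Δ_λ(ρ) = (1 - λ) ρ + λ I / n` on `n × n` complex matrices. -/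
noncomputable def depol {n : Type*} [Fintype n] [DecidableEq n]
    (l : ℝ) (ρ : Matrix n n ℂ) : Matrix n n ℂ :=
  ((1 - l : ℝ) : ℂ) • ρ + ((l / (Fintype.card n) : ℝ) : ℂ) • (1 : Matrix n n ℂ)

/-- Partial normalization `N_w(ρ) = ρ / (Tr ρ)^(1-w)` (the trace of a positive semidefinite
matrix is real, taken via the real part; the power is the real power). -/
noncomputable def normWeight {n : Type*} [Fintype n]
    (w : ℝ) (ρ : Matrix n n ℂ) : Matrix n n ℂ :=
  (ρ.trace.re ^ (1 - w))⁻¹ • ρ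

/-!
Writing `t = Tr ρ ≤ 1`, the partial normalization is `N_w(ρ) = t^(w-1) ρ`, and `t^(w-1)`
decreases in `w`; hence `Δ_λ(N_{w₂}(ρ)) ≤ Δ_λ(N_{w₁}(ρ))` in the Loewner order, and the smaller
one is positive definite because of the `λ I / n` term. The logarithm is operator monotone, and
`X ↦ Tr(τ X)` is monotone for `τ ≥ 0`.
-/

open scoped MatrixOrder Matrix.Norms.L2Operator

section

variable {n : Type*} [Fintype n]

lemma normWeight_posSemidef (w : ℝ) {ρ : Matrix n n ℂ} (hρ : ρ.PosSemidef) :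
    (normWeight w ρ).PosSemidef :=
  hρ.smul (inv_nonneg.mpr (Real.rpow_nonneg hρ.trace_nonneg.1 _))

lemma normWeight_antitone {ρ : Matrix n n ℂ} (hρ : ρ.PosSemidef) (h0 : 0 < ρ.trace.re)
    (h1 : ρ.trace.re ≤ 1) : Antitone (normWeight · ρ) := by
  intro w₁ w₂ hw
  rw [le_iff]
  simp only [normWeight, ← sub_smul]
  refine hρ.smul (sub_nonneg.mpr ?_)
  exact inv_anti₀ (Real.rpow_pos_of_pos h0 _) (Real.rpow_le_rpow_of_exponent_ge h0 h1 (by linarith))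

variable [DecidableEq n]

lemma depol_mono {l : ℝ} (hl : l ≤ 1) : Monotone (depol (n := n) l) := by
  intro ρ σ h
  rw [le_iff, depol, depol, add_sub_add_right_eq_sub, ← smul_sub]
  exact h.smul (Complex.zero_le_real.mpr (sub_nonneg.mpr hl))

lemma depol_posDef [Nonempty n] {l : ℝ} {ρ : Matrix n n ℂ} (hρ : ρ.PosSemidef) (hl0 : 0 < l)
    (hl1 : l ≤ 1) : (depol l ρ).PosDef :=
  PosDef.posSemidef_add (hρ.smul (Complex.zero_le_real.mpr (sub_nonneg.mpr hl1)))
    (PosDef.one.smul (Complex.zero_lt_real.mpr (by positivity)))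

lemma matLog_eq_log {H : Matrix n n ℂ} (hH : H.IsHermitian) : matLog H = CFC.log H := by
  rw [matLog, dif_pos hH, CFC.log, hH.cfc_eq, Matrix.IsHermitian.cfc]
  rfl

namespace Matrix.PosSemidef

lemma trace_mul_nonneg {A B : Matrix n n ℂ} (hA : A.PosSemidef) (hB : B.PosSemidef) :
    0 ≤ (A * B).trace := by
  obtain ⟨C, rfl⟩ := CStarAlgebra.nonneg_iff_eq_star_mul_self.mp hB.nonneg
  rw [← mul_assoc, trace_mul_comm, ← mul_assoc]
  exact (hA.mul_mul_conjTranspose_same C).trace_nonneg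

lemma re_trace_mul_le_re_trace_mul {τ A B : Matrix n n ℂ} (hτ : τ.PosSemidef) (hAB : A ≤ B) :
    (τ * A).trace.re ≤ (τ * B).trace.re := by
  have := (Complex.nonneg_iff.mp (hτ.trace_mul_nonneg hAB)).1
  rwa [mul_sub, trace_sub, Complex.sub_re, sub_nonneg] at this

end Matrix.PosSemidef

end

theorem crossEntropyLoss_monotone_weight_general
    {n : ℕ} (hn : 0 < n)
    (ρ τ : Matrix (Fin n) (Fin n) ℂ)
    (hρ : ρ.PosSemidef) (htr0 : 0 < ρ.trace.re) (htr1 : ρ.trace.re ≤ 1)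
    (hτ : τ.PosSemidef)
    (l : ℝ) (hl0 : 0 < l) (hl1 : l ≤ 1)
    (w₁ w₂ : ℝ) (hw : w₁ ≤ w₂) :
    -(τ * matLog (depol l (normWeight w₁ ρ))).trace.re ≤
      -(τ * matLog (depol l (normWeight w₂ ρ))).trace.re := by
  have : Nonempty (Fin n) := Fin.pos_iff_nonempty.mp hn
  have hle : depol l (normWeight w₂ ρ) ≤ depol l (normWeight w₁ ρ) :=
    depol_mono hl1 (normWeight_antitone hρ htr0 htr1 hw)
  have hpos₁ := depol_posDef (normWeight_posSemidef w₁ hρ) hl0 hl1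
  have hpos₂ := depol_posDef (normWeight_posSemidef w₂ hρ) hl0 hl1
  rw [matLog_eq_log hpos₁.isHermitian, matLog_eq_log hpos₂.isHermitian, neg_le_neg_iff]
  exact hτ.re_trace_mul_le_re_trace_mul (CFC.log_le_log hle hpos₂.isStrictlyPositive)

/-- Monotonicity of the cross-entropy loss in the weight hyperparameter `w`:
for positive semidefinite `ρ` with `0 < Tr ρ ≤ 1`, a state `τ`, `λ ∈ (0,1]`, and
`0 ≤ w₁ ≤ w₂ ≤ 1`, `-Tr(τ log Δ_λ(N_{w₁}(ρ))) ≤ -Tr(τ log Δ_λ(N_{w₂}(ρ)))`. -/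
theorem crossEntropyLoss_monotone_weight
    {n : ℕ} (hn : 0 < n)
    (ρ τ : Matrix (Fin n) (Fin n) ℂ)
    (hρ : ρ.PosSemidef) (htr0 : 0 < ρ.trace.re) (htr1 : ρ.trace.re ≤ 1)
    (hτ : τ.PosSemidef) (hτtr : τ.trace = 1)
    (l : ℝ) (hl0 : 0 < l) (hl1 : l ≤ 1)
    (w₁ w₂ : ℝ) (hw₁ : 0 ≤ w₁) (hw : w₁ ≤ w₂) (hw₂ : w₂ ≤ 1) :
    -(τ * matLog (depol l (normWeight w₁ ρ))).trace.re ≤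
      -(τ * matLog (depol l (normWeight w₂ ρ))).trace.re :=
  crossEntropyLoss_monotone_weight_general hn ρ τ hρ htr0 htr1 hτ l hl0 hl1 w₁ w₂ hw
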